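/- Let T, T̄ be symmetric matrices where T = P^{-1/2} Q P^{-1/2} and T̄ = P̄^{-1/2} Q̄ P̄^{-1/2}, with P = L⁻ + τ⁺I, P̄ = L̄⁻ + τ⁺I, Q = L⁺ + τ⁻I, Q̄ = L̄⁺ + τ⁻I, where L⁻, L̄⁻, L⁺, L̄⁺ are positive semidefinite symmetric matrices and τ⁺ > 0, τ⁻ ≥ 0. If ‖P − P̄‖ ≤ Δ_P and ‖Q − Q̄‖ ≤ Δ_Q, then ‖T − T̄‖ ≤ ((‖Q̄‖ + Δ_Q)/τ⁺)·(Δ_P/τ⁺ + 2√(Δ_P/τ⁺)) + Δ_Q/τ⁺. -/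

import Mathlib

/-!
Write `X = √P`, `Y = √P̄`. From `P, P̄ ⪰ τ⁺` we get `X, Y ⪰ √τ⁺`, hence `‖X⁻¹‖, ‖Y⁻¹‖ ≤ 1/√τ⁺`.
Testing `X² - Y² = X D + D Y` (with `D = X - Y`) against a unit eigenvector `v` of `D`, with
eigenvalue `μ`, gives `μ (⟪v, X v⟫ + ⟪v, Y v⟫) = ⟪v, (P - P̄) v⟫`, so `‖X - Y‖ ≤ Δ_P / (2√τ⁺)` and
`‖X⁻¹ - Y⁻¹‖ = ‖X⁻¹ (Y - X) Y⁻¹‖ ≤ Δ_P / (2 τ⁺ √τ⁺)`. Splitting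
`X⁻¹ Q X⁻¹ - Y⁻¹ Q̄ Y⁻¹ = (X⁻¹ - Y⁻¹) Q X⁻¹ + Y⁻¹ (Q - Q̄) X⁻¹ + Y⁻¹ Q̄ (X⁻¹ - Y⁻¹)` then yields
`‖T - T̄‖ ≤ (‖Q‖ + ‖Q̄‖) Δ_P / (2τ⁺²) + Δ_Q / τ⁺`, and `‖Q‖ ≤ ‖Q̄‖ + Δ_Q`.
-/

open Matrix

/-- The spectral (ℓ²-operator) norm of a square real matrix. -/
noncomputable def specNorm {n : ℕ} (A : Matrix (Fin n) (Fin n) ℝ) : ℝ :=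
  ‖Matrix.toEuclideanCLM (𝕜 := ℝ) A‖

section

open scoped ComplexOrder

/-- The positive semidefinite square root of a positive semidefinite matrix
(the definition removed from Mathlib, restored with its old meaning). -/
noncomputable def Matrix.PosSemidef.sqrt {n : Type*} [Fintype n] [DecidableEq n]
    {𝕜 : Type*} [RCLike 𝕜] {A : Matrix n n 𝕜} (hA : A.PosSemidef) : Matrix n n 𝕜 :=
  hA.1.eigenvectorUnitary.1 * diagonal ((↑) ∘ (√·) ∘ hA.1.eigenvalues) *
  (star hA.1.eigenvectorUnitary : Matrix n n 𝕜)

end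

open scoped Matrix.Norms.L2Operator MatrixOrder RealInnerProductSpace ComplexOrder

theorem norm_mul_mul_sub_mul_mul_le {R : Type*} [NonUnitalSeminormedRing R] (a b q q' : R) :
    ‖a * q * a - b * q' * b‖ ≤ ‖a - b‖ * ‖q‖ * ‖a‖ + ‖b‖ * ‖q - q'‖ * ‖a‖ + ‖b‖ * ‖q'‖ * ‖a - b‖ := by
  have h : a * q * a - b * q' * b = (a - b) * q * a + b * (q - q') * a + b * q' * (a - b) := by
    noncomm_ring
  rw [h]
  refine (norm_add₃_le ..).trans ?_
  gcongr <;> exact norm_mul₃_le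

namespace Matrix

theorem isHermitian_of_smul_one_le {ι 𝕜 : Type*} [Fintype ι] [DecidableEq ι] [RCLike 𝕜]
    {X : Matrix ι ι 𝕜} {s : ℝ} (h : s • 1 ≤ X) : X.IsHermitian := by
  simpa using (le_iff.mp h).1.add (IsHermitian.smul isHermitian_one (.all s))

variable {ι : Type*} [Fintype ι] [DecidableEq ι]

section RCLike

variable {𝕜 : Type*} [RCLike 𝕜]

theorem IsHermitian.norm_cfc_le {A : Matrix ι ι 𝕜} (hA : A.IsHermitian) {f : ℝ → ℝ} {c : ℝ}
    (hc : 0 ≤ c) (hf : ∀ x ∈ spectrum ℝ A, |f x| ≤ c) : ‖cfc f A‖ ≤ c := by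
  rw [hA.cfc_eq, IsHermitian.cfc, Unitary.conjStarAlgAut_apply, ← Unitary.coe_star,
    CStarRing.norm_mul_coe_unitary, CStarRing.norm_coe_unitary_mul, l2_opNorm_diagonal,
    pi_norm_le_iff_of_nonneg hc]
  intro i
  simpa using hf _ (hA.eigenvalues_mem_spectrum_real i)

theorem IsHermitian.norm_le_of_forall_abs_eigenvalues_le {A : Matrix ι ι 𝕜} (hA : A.IsHermitian)
    {c : ℝ} (hc : 0 ≤ c) (h : ∀ i, |hA.eigenvalues i| ≤ c) : ‖A‖ ≤ c := by
  rw [← cfc_id ℝ A hA]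
  refine hA.norm_cfc_le hc fun x hx => ?_
  obtain ⟨i, rfl⟩ := hA.spectrum_real_eq_range_eigenvalues ▸ hx
  exact h i

section SmulOneLE

variable {X : Matrix ι ι 𝕜} {s : ℝ}

theorem le_of_mem_spectrum_of_smul_one_le (h : s • 1 ≤ X) {x : ℝ} (hx : x ∈ spectrum ℝ X) :
    s ≤ x := by
  have hX := isHermitian_of_smul_one_le h
  rw [← Algebra.algebraMap_eq_smul_one] at h
  exact (algebraMap_le_iff_le_spectrum hX).mp h x hx

theorem isUnit_of_smul_one_le (hs : 0 < s) (h : s • 1 ≤ X) : IsUnit X :=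
  (spectrum.zero_notMem_iff ℝ).mp fun h0 => (le_of_mem_spectrum_of_smul_one_le h h0).not_gt hs

theorem norm_inv_le_of_smul_one_le (hs : 0 < s) (h : s • 1 ≤ X) : ‖X⁻¹‖ ≤ s⁻¹ := by
  have hinv : cfc (fun x : ℝ => x⁻¹) X = X⁻¹ := by
    have hu := isUnit_of_smul_one_le hs h
    rw [← hu.unit_spec, ← coe_units_inv]
    exact cfc_inv_id (R := ℝ) hu.unit (isHermitian_of_smul_one_le h)
  rw [← hinv]
  refine (isHermitian_of_smul_one_le h).norm_cfc_le (by positivity) fun x hx => ?_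
  have hsx := le_of_mem_spectrum_of_smul_one_le h hx
  rw [abs_inv, abs_of_pos (hs.trans_le hsx)]
  exact inv_anti₀ hs hsx

end SmulOneLE

theorem PosSemidef.sqrt_eq_cfc {A : Matrix ι ι 𝕜} (hA : A.PosSemidef) :
    hA.sqrt = cfc Real.sqrt A := by
  rw [hA.1.cfc_eq]
  rfl

theorem PosSemidef.sqrt_mul_self {A : Matrix ι ι 𝕜} (hA : A.PosSemidef) :
    hA.sqrt * hA.sqrt = A := by
  rw [hA.sqrt_eq_cfc, ← cfc_mul Real.sqrt Real.sqrt A]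
  conv_rhs => rw [← cfc_id' ℝ A hA.1]
  refine cfc_congr fun x hx => Real.mul_self_sqrt ?_
  exact (StarOrderedRing.nonneg_iff_spectrum_nonneg A hA.1).mp hA.nonneg x hx

theorem PosSemidef.smul_one_le_sqrt {A : Matrix ι ι 𝕜} (hA : A.PosSemidef) {τ : ℝ}
    (h : τ • 1 ≤ A) : √τ • 1 ≤ hA.sqrt := by
  rw [hA.sqrt_eq_cfc, ← Algebra.algebraMap_eq_smul_one]
  exact algebraMap_le_cfc _ _ _ fun x hx =>
    Real.sqrt_le_sqrt (le_of_mem_spectrum_of_smul_one_le h hx)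

end RCLike

section Real

local notation "T" => toEuclideanCLM (n := ι) (𝕜 := ℝ)

theorem le_inner_toEuclideanCLM_self {X : Matrix ι ι ℝ} {s : ℝ} (h : s • 1 ≤ X)
    (v : EuclideanSpace ℝ ι) : s * ‖v‖ ^ 2 ≤ ⟪v, T X v⟫ := by
  have h0 : 0 ≤ ⟪T (X - s • 1) v, v⟫ :=
    (isPositive_toEuclideanLin_iff.mpr (le_iff.mp h)).inner_nonneg_left v
  rw [real_inner_comm] at h0
  simpa [inner_sub_right, inner_smul_right, real_inner_self_eq_norm_sq] using h0

theorem abs_inner_toEuclideanCLM_self_le (M : Matrix ι ι ℝ) (v : EuclideanSpace ℝ ι) :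
    |⟪v, T M v⟫| ≤ ‖M‖ * ‖v‖ ^ 2 :=
  calc |⟪v, T M v⟫| ≤ ‖v‖ * ‖T M v‖ := abs_real_inner_le_norm _ _
    _ ≤ ‖v‖ * (‖M‖ * ‖v‖) := by gcongr; exact (T M).le_opNorm v
    _ = ‖M‖ * ‖v‖ ^ 2 := by ring

theorem two_mul_abs_eigenvalues_le_norm_mul_self_sub_mul_self {X Y : Matrix ι ι ℝ} {s : ℝ}
    (hX : s • 1 ≤ X) (hY : s • 1 ≤ Y) (hD : (X - Y).IsHermitian) (i : ι) :
    2 * s * |hD.eigenvalues i| ≤ ‖X * X - Y * Y‖ := by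
  set v := hD.eigenvectorBasis i
  set μ := hD.eigenvalues i
  have hv : ‖v‖ = 1 := hD.eigenvectorBasis.orthonormal.1 i
  have hDv : T (X - Y) v = μ • v := by
    apply WithLp.ofLp_injective
    simpa only [ofLp_toEuclideanCLM, WithLp.ofLp_smul] using hD.mulVec_eigenvectorBasis i
  have hsymm := isSymmetric_toEuclideanLin_iff.mpr hD
  have hquad : ⟪v, T (X * X - Y * Y) v⟫ = μ * (⟪v, T X v⟫ + ⟪v, T Y v⟫) := by
    have hsplit : X * X - Y * Y = X * (X - Y) + (X - Y) * Y := by noncomm_ring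
    have hDY : ⟪v, T (X - Y) (T Y v)⟫ = ⟪T (X - Y) v, T Y v⟫ := (hsymm v (T Y v)).symm
    rw [hsplit, map_add, map_mul, map_mul, _root_.add_apply, mul_apply_eq_comp,
      mul_apply_eq_comp, inner_add_right, hDY, hDv,
      map_smul, inner_smul_right, inner_smul_left, real_inner_comm (T Y v)]
    simp only [conj_trivial]
    ring
  have hXv := le_inner_toEuclideanCLM_self hX v
  have hYv := le_inner_toEuclideanCLM_self hY v
  have hnorm := abs_inner_toEuclideanCLM_self_le (X * X - Y * Y) v
  rw [hv] at hXv hYv hnorm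
  calc 2 * s * |μ| ≤ |μ| * (⟪v, T X v⟫ + ⟪v, T Y v⟫) := by nlinarith [abs_nonneg μ]
    _ ≤ |μ| * |⟪v, T X v⟫ + ⟪v, T Y v⟫| := by gcongr; exact le_abs_self _
    _ = |⟪v, T (X * X - Y * Y) v⟫| := by rw [hquad, abs_mul]
    _ ≤ ‖X * X - Y * Y‖ := by simpa using hnorm

theorem norm_sub_le_norm_mul_self_sub_mul_self_div {X Y : Matrix ι ι ℝ} {s : ℝ} (hs : 0 < s)
    (hX : s • 1 ≤ X) (hY : s • 1 ≤ Y) : ‖X - Y‖ ≤ ‖X * X - Y * Y‖ / (2 * s) := by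
  have hD := (isHermitian_of_smul_one_le hX).sub (isHermitian_of_smul_one_le hY)
  refine hD.norm_le_of_forall_abs_eigenvalues_le (by positivity) fun i => ?_
  rw [le_div_iff₀ (by positivity), mul_comm]
  exact two_mul_abs_eigenvalues_le_norm_mul_self_sub_mul_self hX hY hD i

end Real

theorem PosSemidef.norm_inv_sqrt_le {𝕜 : Type*} [RCLike 𝕜] {A : Matrix ι ι 𝕜}
    (hA : A.PosSemidef) {τ : ℝ} (hτ : 0 < τ) (h : τ • 1 ≤ A) : ‖hA.sqrt⁻¹‖ ≤ (√τ)⁻¹ :=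
  norm_inv_le_of_smul_one_le (Real.sqrt_pos.2 hτ) (hA.smul_one_le_sqrt h)

theorem PosSemidef.norm_inv_sqrt_sub_inv_sqrt_le {A B : Matrix ι ι ℝ} (hA : A.PosSemidef)
    (hB : B.PosSemidef) {τ : ℝ} (hτ : 0 < τ) (hAτ : τ • 1 ≤ A) (hBτ : τ • 1 ≤ B) :
    ‖hA.sqrt⁻¹ - hB.sqrt⁻¹‖ ≤ ‖A - B‖ / (2 * τ * √τ) := by
  have hsτ : 0 < √τ := Real.sqrt_pos.2 hτ
  have hX := hA.smul_one_le_sqrt hAτ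
  have hY := hB.smul_one_le_sqrt hBτ
  have hXY : ‖hB.sqrt - hA.sqrt‖ ≤ ‖A - B‖ / (2 * √τ) := by
    simpa only [norm_sub_rev, hA.sqrt_mul_self, hB.sqrt_mul_self] using
      norm_sub_le_norm_mul_self_sub_mul_self_div hsτ hX hY
  rw [nonsing_inv_eq_ringInverse, nonsing_inv_eq_ringInverse,
    Ring.inverse_sub_inverse (iff_of_true (isUnit_of_smul_one_le hsτ hX)
      (isUnit_of_smul_one_le hsτ hY)), ← nonsing_inv_eq_ringInverse,
    ← nonsing_inv_eq_ringInverse]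
  calc ‖hA.sqrt⁻¹ * (hB.sqrt - hA.sqrt) * hB.sqrt⁻¹‖
      ≤ ‖hA.sqrt⁻¹‖ * ‖hB.sqrt - hA.sqrt‖ * ‖hB.sqrt⁻¹‖ := norm_mul₃_le
    _ ≤ (√τ)⁻¹ * (‖A - B‖ / (2 * √τ)) * (√τ)⁻¹ := by
      gcongr
      exacts [hA.norm_inv_sqrt_le hτ hAτ, hB.norm_inv_sqrt_le hτ hBτ]
    _ = ‖A - B‖ / (2 * τ * √τ) := by
      field_simp
      rw [Real.sq_sqrt hτ.le, mul_comm]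

theorem PosSemidef.norm_inv_sqrt_mul_mul_inv_sqrt_sub_le {P Pb Q Qb : Matrix ι ι ℝ}
    (hP : P.PosSemidef) (hPb : Pb.PosSemidef) {τ : ℝ} (hτ : 0 < τ) (hPτ : τ • 1 ≤ P)
    (hPbτ : τ • 1 ≤ Pb) :
    ‖hP.sqrt⁻¹ * Q * hP.sqrt⁻¹ - hPb.sqrt⁻¹ * Qb * hPb.sqrt⁻¹‖
      ≤ (‖Q‖ + ‖Qb‖) * ‖P - Pb‖ / (2 * τ ^ 2) + ‖Q - Qb‖ / τ := by
  have hinv := hP.norm_inv_sqrt_le hτ hPτ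
  have hinvb := hPb.norm_inv_sqrt_le hτ hPbτ
  have hdiff := hP.norm_inv_sqrt_sub_inv_sqrt_le hPb hτ hPτ hPbτ
  calc _ ≤ ‖P - Pb‖ / (2 * τ * √τ) * ‖Q‖ * (√τ)⁻¹ + (√τ)⁻¹ * ‖Q - Qb‖ * (√τ)⁻¹
          + (√τ)⁻¹ * ‖Qb‖ * (‖P - Pb‖ / (2 * τ * √τ)) :=
        (norm_mul_mul_sub_mul_mul_le _ _ _ _).trans (by gcongr)
    _ = _ := by
        field_simp
        rw [Real.sq_sqrt hτ.le]
        ring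

end Matrix

theorem sponge_operator_perturbation_general {n : ℕ}
    (Lm Lmb P Pb Q Qb T Tb : Matrix (Fin n) (Fin n) ℝ)
    (τp ΔP ΔQ : ℝ) (hτp : 0 < τp)
    (hLm : Lm.PosSemidef) (hLmb : Lmb.PosSemidef)
    (hPdef : P = Lm + τp • (1 : Matrix (Fin n) (Fin n) ℝ))
    (hPbdef : Pb = Lmb + τp • (1 : Matrix (Fin n) (Fin n) ℝ))
    (hP : P.PosSemidef) (hPb : Pb.PosSemidef)
    (hTdef : T = (hP.sqrt)⁻¹ * Q * (hP.sqrt)⁻¹)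
    (hTbdef : Tb = (hPb.sqrt)⁻¹ * Qb * (hPb.sqrt)⁻¹)
    (hΔP : specNorm (P - Pb) ≤ ΔP) (hΔQ : specNorm (Q - Qb) ≤ ΔQ) :
    specNorm (T - Tb)
      ≤ ((specNorm Qb + ΔQ) / τp) * (ΔP / τp + 2 * Real.sqrt (ΔP / τp))
        + ΔQ / τp := by
  simp only [specNorm, ← cstar_norm_def] at hΔP hΔQ ⊢
  have hPτ : τp • 1 ≤ P := by rwa [le_iff, hPdef, add_sub_cancel_right]
  have hPbτ : τp • 1 ≤ Pb := by rwa [le_iff, hPbdef, add_sub_cancel_right]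
  have hΔP0 : 0 ≤ ΔP := (norm_nonneg _).trans hΔP
  have hΔQ0 : 0 ≤ ΔQ := (norm_nonneg _).trans hΔQ
  have hQ : ‖Q‖ ≤ ‖Qb‖ + ΔQ := by linarith [norm_le_norm_add_norm_sub' Q Qb]
  rw [hTdef, hTbdef]
  calc _ ≤ (‖Q‖ + ‖Qb‖) * ‖P - Pb‖ / (2 * τp ^ 2) + ‖Q - Qb‖ / τp :=
        hP.norm_inv_sqrt_mul_mul_inv_sqrt_sub_le hPb hτp hPτ hPbτ
    _ ≤ (‖Qb‖ + ΔQ) / τp * (ΔP / τp) + ΔQ / τp := by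
        rw [div_mul_div_comm, ← sq, ← mul_div_mul_left _ (τp ^ 2) two_ne_zero]
        gcongr ?_ / _ + ?_ / _
        nlinarith [norm_nonneg (P - Pb), norm_nonneg Qb]
    _ ≤ _ := by
        gcongr
        exact le_add_of_nonneg_right (by positivity)

/-- Perturbation bound for `T = P^{-1/2} Q P^{-1/2}` versus
`T̄ = P̄^{-1/2} Q̄ P̄^{-1/2}` with `P = L⁻ + τ⁺I`, `P̄ = L̄⁻ + τ⁺I`,
`Q = L⁺ + τ⁻I`, `Q̄ = L̄⁺ + τ⁻I` for PSD `L⁻, L̄⁻, L⁺, L̄⁺`, `τ⁺ > 0`,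
`τ⁻ ≥ 0`: if `‖P - P̄‖ ≤ Δ_P` and `‖Q - Q̄‖ ≤ Δ_Q`, then
`‖T - T̄‖ ≤ ((‖Q̄‖+Δ_Q)/τ⁺)(Δ_P/τ⁺ + 2√(Δ_P/τ⁺)) + Δ_Q/τ⁺`. -/
theorem sponge_operator_perturbation {n : ℕ}
    (Lm Lmb Lp Lpb P Pb Q Qb T Tb : Matrix (Fin n) (Fin n) ℝ)
    (τp τm ΔP ΔQ : ℝ) (hτp : 0 < τp) (hτm : 0 ≤ τm)
    (hLm : Lm.PosSemidef) (hLmb : Lmb.PosSemidef)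
    (hLp : Lp.PosSemidef) (hLpb : Lpb.PosSemidef)
    (hPdef : P = Lm + τp • (1 : Matrix (Fin n) (Fin n) ℝ))
    (hPbdef : Pb = Lmb + τp • (1 : Matrix (Fin n) (Fin n) ℝ))
    (hQdef : Q = Lp + τm • (1 : Matrix (Fin n) (Fin n) ℝ))
    (hQbdef : Qb = Lpb + τm • (1 : Matrix (Fin n) (Fin n) ℝ))
    (hP : P.PosSemidef) (hPb : Pb.PosSemidef)
    (hTdef : T = (hP.sqrt)⁻¹ * Q * (hP.sqrt)⁻¹)
    (hTbdef : Tb = (hPb.sqrt)⁻¹ * Qb * (hPb.sqrt)⁻¹)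
    (hΔP : specNorm (P - Pb) ≤ ΔP) (hΔQ : specNorm (Q - Qb) ≤ ΔQ) :
    specNorm (T - Tb)
      ≤ ((specNorm Qb + ΔQ) / τp) * (ΔP / τp + 2 * Real.sqrt (ΔP / τp))
        + ΔQ / τp :=
  sponge_operator_perturbation_general Lm Lmb P Pb Q Qb T Tb τp ΔP ΔQ hτp hLm hLmb hPdef hPbdef hP
    hPb hTdef hTbdef hΔP hΔQ
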